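/- arXiv:2204.03802 — 3 statements merged into one kernel-verified Lean document; each statement's English description precedes it below -/
import Mathlib

section
/- Let Θ ∈ (0, π] and θ_max ∈ (0, π], and let N = ⌈Θ/θ_max⌉ (a positive integer). Then N is the least positive integer n satisfying Θ ≤ n·θ_max, and for every positive integer n with Θ ≤ n·θ_max one has N · sin(Θ/(2N)) ≤ n · sin(Θ/(2n)). That is, among all equally spaced configurations whose per-hop dome angle Θ/n does not exceed θ_max, the latency T(n) = (2rn/c) sin(Θ/(2n)) is minimized by the smallest feasible number of hops. -/
open Real

lemma sin_ratio_aux {a b : ℝ} (ha : 0 < a) (hab : a ≤ b) (hb : b ≤ π) :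
    a * Real.sin b ≤ b * Real.sin a := by
  have hb0 : 0 < b := ha.trans_le hab
  have hab1 : a / b ≤ 1 := (div_le_one hb0).2 hab
  have key := strictConcaveOn_sin_Icc.concaveOn.2
    (show (0:ℝ) ∈ Set.Icc 0 π from ⟨le_rfl, Real.pi_pos.le⟩)
    (show b ∈ Set.Icc 0 π from ⟨hb0.le, hb⟩)
    (show (0:ℝ) ≤ 1 - a / b by linarith)
    (show (0:ℝ) ≤ a / b by positivity) (by ring)
  simp only [smul_eq_mul, mul_zero, zero_add, Real.sin_zero, mul_zero, zero_add] at key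
  rw [div_mul_cancel₀ _ hb0.ne'] at key
  calc a * Real.sin b = b * (a / b * Real.sin b) := by field_simp
    _ ≤ b * Real.sin a := by nlinarith [key]

/-- Proposition 3: for `Θ, θ_max ∈ (0, π]`, the number `N = ⌈Θ/θ_max⌉` is the least
positive integer `n` with `Θ ≤ n·θ_max`, and among all feasible equally spaced
configurations the latency is minimized at `N`:
`N sin(Θ/(2N)) ≤ n sin(Θ/(2n))` whenever `Θ ≤ n·θ_max` with `n` a positive integer. -/
theorem ceil_div_isLeast_and_minimizes_latency (Θ θmax : ℝ)
    (hΘ : Θ ∈ Set.Ioc (0 : ℝ) π) (hθmax : θmax ∈ Set.Ioc (0 : ℝ) π)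
    (N : ℕ) (hN : N = ⌈Θ / θmax⌉₊) :
    IsLeast {n : ℕ | 0 < n ∧ Θ ≤ n * θmax} N ∧
    ∀ n : ℕ, 0 < n → Θ ≤ n * θmax →
      (N : ℝ) * Real.sin (Θ / (2 * N)) ≤ (n : ℝ) * Real.sin (Θ / (2 * n)) := by
  obtain ⟨hΘ0, hΘπ⟩ := hΘ
  obtain ⟨hθ0, hθπ⟩ := hθmax
  have hdiv : 0 < Θ / θmax := div_pos hΘ0 hθ0
  have hNpos : 0 < N := by rw [hN]; exact Nat.ceil_pos.2 hdiv
  have hNfeas : Θ ≤ (N : ℝ) * θmax := by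
    rw [← div_le_iff₀ hθ0] at *
    exact (Nat.le_ceil _).trans (by rw [hN])
  have hleast : IsLeast {n : ℕ | 0 < n ∧ Θ ≤ n * θmax} N := by
    constructor
    · exact ⟨hNpos, hNfeas⟩
    · rintro n ⟨hn0, hn⟩
      rw [hN, Nat.ceil_le, div_le_iff₀ hθ0]
      linarith
  refine ⟨hleast, fun n hn0 hn => ?_⟩
  have hNn : N ≤ n := hleast.2 ⟨hn0, hn⟩
  have hNr : (0:ℝ) < N := by exact_mod_cast hNpos
  have hnr : (0:ℝ) < n := by exact_mod_cast hn0
  have hNnr : (N:ℝ) ≤ n := by exact_mod_cast hNn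
  set a := Θ / (2 * n) with hadef
  set b := Θ / (2 * N) with hbdef
  have ha : 0 < a := by positivity
  have hab : a ≤ b := by
    apply div_le_div_of_nonneg_left hΘ0.le (by positivity)
    linarith
  have h1N : (1:ℝ) ≤ N := by exact_mod_cast hNpos
  have hb : b ≤ π := by
    have : b ≤ Θ / 2 := by
      apply div_le_div_of_nonneg_left hΘ0.le (by positivity)
      linarith
    linarith [Real.pi_pos]
  have key := sin_ratio_aux ha hab hb
  rw [hadef, hbdef] at key
  rw [div_mul_eq_mul_div, div_mul_eq_mul_div, div_le_div_iff₀ (by positivity) (by positivity)] at key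
  nlinarith [key]
end

section
/- Let S² be the unit sphere in ℝ³ with its normalized (probability) surface measure μ, let v be a fixed unit vector, let N ≥ 1 be an integer, and let X₁, …, X_N be the coordinates of a point of (S²)^N distributed according to the product measure μ^{⊗N} (i.e. N independent uniformly distributed satellites). Define the contact angle θ₀ = min_{1 ≤ i ≤ N} arccos(⟪X_i, v⟫), the angle from v to the nearest satellite. Then for every θ ∈ [0, π], the cumulative distribution function of the contact angle is P[θ₀ ≤ θ] = 1 − ((1 + cos θ)/2)^N. -/
open Real MeasureTheory
open scoped RealInnerProductSpace

/-!
Archimedes' hat-box theorem: for a rotation-invariant probability measure `μ` on the unit sphere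
of a three-dimensional space, `⟪X, v⟫` is uniform on `[-1, 1]`. Averaging `⟪x, u⟫ ^ (2n)` over the
unit vectors `u` of the circle spanned by two basis vectors `e₀, e₁` gives, by Fubini and
invariance, `m₂ₙ = wₙ · 𝔼 (1 - ⟪X, e₂⟫²)ⁿ` with `wₙ = ∏ᵢ₍ₙ₎ (2i+1)/(2i+2) < 1`; expanding the
right-hand side, this determines the even moments `m₂ₙ` recursively, the odd ones vanish by
symmetry, and the uniform law satisfies the same relations. A law on `[-1, 1]` is determined by
its moments (Weierstrass), so the law of `⟪X, v⟫` is uniform, `P[arccos ⟪X, v⟫ > θ] = (1 + cos θ)/2`,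
and the contact angle exceeds `θ` exactly when all `N` independent satellites do.
-/

open Finset ProbabilityTheory Polynomial Module

theorem integral_sin_pow_even_zero_two_pi (n : ℕ) :
    ∫ x in (0)..2 * π, sin x ^ (2 * n) =
      2 * π * ∏ i ∈ range n, (2 * (i : ℝ) + 1) / (2 * i + 2) := by
  have hper : Function.Periodic (fun x => sin x ^ (2 * n)) π := fun x => by
    simp only [sin_add_pi, pow_mul, neg_sq]
  have hint (a b : ℝ) : IntervalIntegrable (fun x => sin x ^ (2 * n)) volume a b :=
    (continuous_sin.pow _).intervalIntegrable a b
  rw [two_mul π, ← intervalIntegral.integral_add_adjacent_intervals (hint 0 π) (hint π (π + π)),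
    hper.intervalIntegral_add_eq π 0, zero_add, integral_sin_pow_even]
  ring

theorem integral_mul_cos_add_mul_sin_pow_even (a b : ℝ) (n : ℕ) :
    ∫ α in (0)..2 * π, (a * cos α + b * sin α) ^ (2 * n) =
      (a ^ 2 + b ^ 2) ^ n * ∫ α in (0)..2 * π, sin α ^ (2 * n) := by
  -- polar form `a cos α + b sin α = r sin (α + φ)`, where `r e^{iφ} = b + a i`
  set z : ℂ := ⟨b, a⟩
  have hpolar (α : ℝ) : a * cos α + b * sin α = ‖z‖ * sin (α + z.arg) := by
    have hre := z.norm_mul_cos_arg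
    have him := z.norm_mul_sin_arg
    rw [sin_add]
    linear_combination (-sin α) * hre - cos α * him
  have hnorm : ‖z‖ ^ 2 = a ^ 2 + b ^ 2 := by
    rw [Complex.sq_norm, Complex.normSq_mk]
    ring
  have hper : Function.Periodic (fun α => sin α ^ (2 * n)) (2 * π) := fun α => by
    simp only [sin_periodic α]
  simp_rw [hpolar, mul_pow]
  rw [intervalIntegral.integral_const_mul, pow_mul, hnorm,
    intervalIntegral.integral_comp_add_right (fun α => sin α ^ (2 * n)), zero_add,
    add_comm (2 * π), hper.intervalIntegral_add_eq z.arg 0, zero_add]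

theorem prod_two_mul_add_one_div_lt_one {n : ℕ} (hn : n ≠ 0) :
    ∏ i ∈ range n, (2 * (i : ℝ) + 1) / (2 * i + 2) < 1 := by
  -- `π ∏ᵢ₍ₙ₎ (2i+1)/(2i+2) = ∫₀^π sin^{2n} ≤ ∫₀^π sin = 2 < π`
  have h := integral_sin_pow_antitone (show 1 ≤ 2 * n by omega)
  simp only [pow_one, integral_sin, cos_zero, cos_pi, integral_sin_pow_even] at h
  nlinarith [pi_gt_three]

theorem prod_two_mul_add_one_div_mul_prod (n : ℕ) :
    (∏ i ∈ range n, (2 * (i : ℝ) + 1) / (2 * i + 2)) *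
      ∏ i ∈ range n, (2 * (i : ℝ) + 2) / (2 * i + 3) = 1 / (2 * n + 1) := by
  induction n with
  | zero => simp
  | succ n ih =>
    rw [prod_range_succ, prod_range_succ, mul_mul_mul_comm, ih]
    push_cast
    field_simp
    ring

theorem Continuous.integrable_of_ae_mem_isCompact {X F : Type*} [TopologicalSpace X] [T2Space X]
    [MeasurableSpace X] [OpensMeasurableSpace X] [NormedAddCommGroup F] {μ : Measure X}
    [IsFiniteMeasure μ] {K : Set X} (hK : IsCompact K) (hμK : ∀ᵐ x ∂μ, x ∈ K) {f : X → F}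
    (hf : Continuous f) : Integrable f μ :=
  Measure.restrict_eq_self_of_ae_mem hμK ▸ hf.continuousOn.integrableOn_compact hK

section CompactInterval

variable {ν ν' : Measure ℝ} [IsFiniteMeasure ν] [IsFiniteMeasure ν'] {a b : ℝ}

theorem integral_eval_eq_sum_moments (hν : ∀ᵐ t ∂ν, t ∈ Set.Icc a b) (p : ℝ[X]) :
    ∫ t, p.eval t ∂ν = ∑ i ∈ range (p.natDegree + 1), p.coeff i * ∫ t, t ^ i ∂ν := by
  simp_rw [eval_eq_sum_range, ← integral_const_mul]
  exact integral_finsetSum _ fun i _ =>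
    (continuous_const.mul (continuous_pow i)).integrable_of_ae_mem_isCompact isCompact_Icc hν

theorem dist_integral_le_of_dist_le_on_Icc (hν : ∀ᵐ t ∂ν, t ∈ Set.Icc a b) {f g : ℝ → ℝ}
    (hf : Continuous f) (hg : Continuous g) {δ : ℝ}
    (hfg : ∀ t ∈ Set.Icc a b, dist (f t) (g t) ≤ δ) :
    dist (∫ t, f t ∂ν) (∫ t, g t ∂ν) ≤ δ * ν.real Set.univ := by
  rw [dist_eq_norm, ← integral_sub (hf.integrable_of_ae_mem_isCompact isCompact_Icc hν)
    (hg.integrable_of_ae_mem_isCompact isCompact_Icc hν)]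
  refine norm_integral_le_of_norm_le_const ?_
  filter_upwards [hν] with t ht
  rw [← dist_eq_norm]
  exact hfg t ht

theorem Measure.ext_of_integral_pow_eq (hν : ∀ᵐ t ∂ν, t ∈ Set.Icc a b)
    (hν' : ∀ᵐ t ∂ν', t ∈ Set.Icc a b) (h : ∀ k : ℕ, ∫ t, t ^ k ∂ν = ∫ t, t ^ k ∂ν') :
    ν = ν' := by
  have hpoly (p : ℝ[X]) : ∫ t, p.eval t ∂ν = ∫ t, p.eval t ∂ν' := by
    simp [integral_eval_eq_sum_moments hν, integral_eval_eq_sum_moments hν', h]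
  refine ext_of_forall_integral_eq_of_IsFiniteMeasure fun f => eq_of_forall_dist_le fun ε hε => ?_
  set C := ν.real Set.univ + ν'.real Set.univ + 1
  have hC : 0 < C := by positivity
  obtain ⟨p, hp⟩ := exists_polynomial_near_of_continuousOn a b f f.continuous.continuousOn
    (ε / C) (div_pos hε hC)
  have hfp : ∀ t ∈ Set.Icc a b, dist (f t) (p.eval t) ≤ ε / C := fun t ht =>
    (dist_comm _ _).trans_le (hp t ht).le
  calc dist (∫ t, f t ∂ν) (∫ t, f t ∂ν')
      ≤ dist (∫ t, f t ∂ν) (∫ t, p.eval t ∂ν) + dist (∫ t, p.eval t ∂ν') (∫ t, f t ∂ν') := by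
        rw [hpoly]
        exact dist_triangle _ _ _
    _ ≤ ε / C * ν.real Set.univ + ε / C * ν'.real Set.univ := by
        rw [dist_comm (∫ t, p.eval t ∂ν')]
        gcongr
        · exact dist_integral_le_of_dist_le_on_Icc hν f.continuous p.continuous hfp
        · exact dist_integral_le_of_dist_le_on_Icc hν' f.continuous p.continuous hfp
    _ ≤ ε := by
        rw [← mul_add, div_mul_eq_mul_div, div_le_iff₀ hC]
        nlinarith

theorem integral_one_sub_sq_pow (hν : ∀ᵐ t ∂ν, t ∈ Set.Icc a b) (n : ℕ) :
    ∫ t, (1 - t ^ 2) ^ n ∂ν =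
      ∑ k ∈ range (n + 1), (-1) ^ k * (n.choose k : ℝ) * ∫ t, t ^ (2 * k) ∂ν := by
  have hexp (t : ℝ) : (1 - t ^ 2) ^ n =
      ∑ k ∈ range (n + 1), (-1) ^ k * (n.choose k : ℝ) * t ^ (2 * k) := by
    rw [sub_eq_neg_add, add_pow]
    refine sum_congr rfl fun k _ => ?_
    rw [neg_pow, pow_mul, one_pow, mul_one]
    ring
  simp_rw [hexp, ← integral_const_mul]
  exact integral_finsetSum _ fun k _ =>
    (continuous_const.mul (continuous_pow _)).integrable_of_ae_mem_isCompact isCompact_Icc hν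

theorem integral_pow_even_eq_of_eq_mul [IsProbabilityMeasure ν] [IsProbabilityMeasure ν']
    (hν : ∀ᵐ t ∂ν, t ∈ Set.Icc a b) (hν' : ∀ᵐ t ∂ν', t ∈ Set.Icc a b)
    {c : ℕ → ℝ} (hc : ∀ n ≠ 0, |c n| < 1)
    (h : ∀ n, ∫ t, t ^ (2 * n) ∂ν = c n * ∫ t, (1 - t ^ 2) ^ n ∂ν)
    (h' : ∀ n, ∫ t, t ^ (2 * n) ∂ν' = c n * ∫ t, (1 - t ^ 2) ^ n ∂ν') (n : ℕ) :
    ∫ t, t ^ (2 * n) ∂ν = ∫ t, t ^ (2 * n) ∂ν' := by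
  induction n using Nat.strong_induction_on with
  | _ n ih =>
  rcases eq_or_ne n 0 with rfl | hn
  · simp
  have hlower : ∑ k ∈ range n, (-1) ^ k * (n.choose k : ℝ) * ∫ t, t ^ (2 * k) ∂ν =
      ∑ k ∈ range n, (-1) ^ k * (n.choose k : ℝ) * ∫ t, t ^ (2 * k) ∂ν' :=
    sum_congr rfl fun k hk => by rw [ih k (mem_range.mp hk)]
  have e := h n
  have e' := h' n
  rw [integral_one_sub_sq_pow hν, sum_range_succ, hlower] at e
  rw [integral_one_sub_sq_pow hν', sum_range_succ] at e'
  simp only [Nat.choose_self, Nat.cast_one, mul_one] at e e'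
  have hfix : (1 - c n * (-1) ^ n) * (∫ t, t ^ (2 * n) ∂ν - ∫ t, t ^ (2 * n) ∂ν') = 0 := by
    linear_combination e - e'
  have hne : 1 - c n * (-1) ^ n ≠ 0 := by
    have : |c n * (-1) ^ n| < 1 := by simpa [abs_mul] using hc n hn
    rw [sub_ne_zero]
    rintro h1
    rw [← h1, abs_one] at this
    exact lt_irrefl _ this
  exact sub_eq_zero.mp ((mul_eq_zero.mp hfix).resolve_left hne)

theorem Measure.eq_of_integral_pow_even_eq_mul [IsProbabilityMeasure ν] [IsProbabilityMeasure ν']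
    (hν : ∀ᵐ t ∂ν, t ∈ Set.Icc a b) (hν' : ∀ᵐ t ∂ν', t ∈ Set.Icc a b)
    (hodd : ∀ k, Odd k → ∫ t, t ^ k ∂ν = 0) (hodd' : ∀ k, Odd k → ∫ t, t ^ k ∂ν' = 0)
    {c : ℕ → ℝ} (hc : ∀ n ≠ 0, |c n| < 1)
    (h : ∀ n, ∫ t, t ^ (2 * n) ∂ν = c n * ∫ t, (1 - t ^ 2) ^ n ∂ν)
    (h' : ∀ n, ∫ t, t ^ (2 * n) ∂ν' = c n * ∫ t, (1 - t ^ 2) ^ n ∂ν') :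
    ν = ν' :=
  Measure.ext_of_integral_pow_eq hν hν' fun k => by
    obtain ⟨n, rfl | rfl⟩ := Nat.even_or_odd' k
    · exact integral_pow_even_eq_of_eq_mul hν hν' hc h h' n
    · rw [hodd _ (odd_two_mul_add_one n), hodd' _ (odd_two_mul_add_one n)]

end CompactInterval

instance : IsProbabilityMeasure (volume[|Set.Icc (-1 : ℝ) 1]) :=
  cond_isProbabilityMeasure_of_finite (by simp) (by simp)

theorem integral_cond_Icc_neg_one_one (f : ℝ → ℝ) :
    ∫ t, f t ∂volume[|Set.Icc (-1 : ℝ) 1] = (∫ t in (-1)..1, f t) / 2 := by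
  rw [ProbabilityTheory.cond, integral_smul_measure, intervalIntegral.integral_of_le (by norm_num),
    ← integral_Icc_eq_integral_Ioc, Real.volume_Icc]
  norm_num
  ring

theorem integral_pow_cond_Icc_neg_one_one (k : ℕ) :
    ∫ t, t ^ k ∂volume[|Set.Icc (-1 : ℝ) 1] = (1 - (-1) ^ (k + 1)) / (2 * (k + 1)) := by
  rw [integral_cond_Icc_neg_one_one, integral_pow, one_pow]
  field_simp

theorem integral_one_sub_sq_pow_cond_Icc_neg_one_one (n : ℕ) :
    ∫ t, (1 - t ^ 2) ^ n ∂volume[|Set.Icc (-1 : ℝ) 1] =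
      ∏ i ∈ range n, (2 * (i : ℝ) + 2) / (2 * i + 3) := by
  have hsubst := intervalIntegral.integral_comp_mul_deriv (a := 0) (b := π)
    (f := cos) (f' := fun x => -sin x) (g := fun t => (1 - t ^ 2) ^ n)
    (fun x _ => hasDerivAt_cos x) continuous_sin.neg.continuousOn (by fun_prop)
  have hsin (x : ℝ) : (1 - cos x ^ 2) ^ n * -sin x = -sin x ^ (2 * n + 1) := by
    rw [← sin_sq, pow_succ _ (2 * n), pow_mul]
    ring
  simp only [Function.comp_def, hsin, intervalIntegral.integral_neg, integral_sin_pow_odd,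
    cos_zero, cos_pi] at hsubst
  rw [integral_cond_Icc_neg_one_one, intervalIntegral.integral_symm, ← hsubst]
  ring

theorem integral_pow_even_cond_Icc_neg_one_one (n : ℕ) :
    ∫ t, t ^ (2 * n) ∂volume[|Set.Icc (-1 : ℝ) 1] =
      (∏ i ∈ range n, (2 * (i : ℝ) + 1) / (2 * i + 2)) *
        ∫ t, (1 - t ^ 2) ^ n ∂volume[|Set.Icc (-1 : ℝ) 1] := by
  rw [integral_one_sub_sq_pow_cond_Icc_neg_one_one, prod_two_mul_add_one_div_mul_prod,
    integral_pow_cond_Icc_neg_one_one, pow_succ, pow_mul]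
  push_cast
  field_simp
  norm_num

theorem lt_arccos_iff_lt_cos {θ y : ℝ} (hθ : θ ∈ Set.Icc 0 π) (hy : y ∈ Set.Icc (-1) 1) :
    θ < arccos y ↔ y < cos θ := by
  conv_lhs => rw [← arccos_cos hθ.1 hθ.2]
  exact strictAntiOn_arccos.lt_iff_gt ⟨neg_one_le_cos θ, cos_le_one θ⟩ hy

theorem cond_Icc_neg_one_one_setOf_lt_arccos {θ : ℝ} (hθ : θ ∈ Set.Icc 0 π) :
    volume[|Set.Icc (-1 : ℝ) 1] {y | θ < arccos y} = ENNReal.ofReal ((1 + cos θ) / 2) := by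
  have hset : Set.Icc (-1) 1 ∩ {y | θ < arccos y} = Set.Ico (-1) (cos θ) := by
    ext y
    simp only [Set.mem_inter_iff, Set.mem_ofPred_eq, Set.mem_Ico]
    constructor
    · rintro ⟨hy, h⟩
      exact ⟨hy.1, (lt_arccos_iff_lt_cos hθ hy).mp h⟩
    · rintro ⟨h1, h2⟩
      have hy : y ∈ Set.Icc (-1) 1 := ⟨h1, h2.le.trans (cos_le_one θ)⟩
      exact ⟨hy, (lt_arccos_iff_lt_cos hθ hy).mpr h2⟩
  rw [cond_apply measurableSet_Icc, hset, Real.volume_Icc, Real.volume_Ico,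
    ← ENNReal.ofReal_inv_of_pos (by norm_num), ← ENNReal.ofReal_mul (by norm_num)]
  congr 1
  ring

section InnerProductSpace

variable {E : Type*} [NormedAddCommGroup E] [InnerProductSpace ℝ E]

theorem norm_cos_smul_add_sin_smul {e f : E} (he : ‖e‖ = 1) (hf : ‖f‖ = 1) (hef : ⟪e, f⟫ = 0)
    (α : ℝ) : ‖cos α • e + sin α • f‖ = 1 := by
  have h2 : ‖cos α • e + sin α • f‖ ^ 2 = 1 := by
    have hee : ⟪e, e⟫ = 1 := by rw [real_inner_self_eq_norm_sq, he, one_pow]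
    have hff : ⟪f, f⟫ = 1 := by rw [real_inner_self_eq_norm_sq, hf, one_pow]
    rw [← real_inner_self_eq_norm_sq]
    simp only [inner_add_left, inner_add_right, real_inner_smul_left, real_inner_smul_right,
      hee, hff, hef, real_inner_comm e f]
    linear_combination cos_sq_add_sin_sq α
  exact (pow_eq_one_iff_of_nonneg (norm_nonneg _) two_ne_zero).mp h2

theorem integral_inner_cos_smul_add_sin_smul_pow_even (x e f : E) (n : ℕ) :
    ∫ α in (0)..2 * π, ⟪x, cos α • e + sin α • f⟫ ^ (2 * n) =
      (⟪e, x⟫ ^ 2 + ⟪f, x⟫ ^ 2) ^ n * (2 * π * ∏ i ∈ range n, (2 * (i : ℝ) + 1) / (2 * i + 2)) := by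
  rw [← integral_sin_pow_even_zero_two_pi, ← integral_mul_cos_add_mul_sin_pow_even]
  simp only [inner_add_right, real_inner_smul_right, real_inner_comm x, mul_comm (cos _),
    mul_comm (sin _)]

variable [MeasurableSpace E] [BorelSpace E] {μ : Measure E}

theorem map_inner_eq_of_norm_eq (hinv : ∀ g : E ≃ₗᵢ[ℝ] E, μ.map g = μ) {u w : E}
    (h : ‖u‖ = ‖w‖) : μ.map (⟪·, u⟫) = μ.map (⟪·, w⟫) := by
  set g := (ℝ ∙ (u - w))ᗮ.reflection
  have hcomp : (⟪·, w⟫) ∘ g = (⟪·, u⟫) := by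
    ext x
    rw [Function.comp_apply, ← Submodule.reflection_sub h, LinearIsometryEquiv.inner_map_map]
  rw [← hcomp, ← Measure.map_map (by fun_prop) g.continuous.measurable, hinv g]

theorem integral_comp_inner_eq_of_norm_eq (hinv : ∀ g : E ≃ₗᵢ[ℝ] E, μ.map g = μ) {u w : E}
    (h : ‖u‖ = ‖w‖) {f : ℝ → ℝ} (hf : Continuous f) :
    ∫ x, f ⟪x, u⟫ ∂μ = ∫ t, f t ∂(μ.map (⟪·, w⟫)) := by
  rw [← map_inner_eq_of_norm_eq hinv h, integral_map (by fun_prop) hf.aestronglyMeasurable]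

theorem integral_pow_map_inner_of_odd (hinv : ∀ g : E ≃ₗᵢ[ℝ] E, μ.map g = μ) (v : E) {k : ℕ}
    (hk : Odd k) : ∫ t, t ^ k ∂(μ.map (⟪·, v⟫)) = 0 := by
  have h := integral_comp_inner_eq_of_norm_eq hinv (norm_neg v) (continuous_pow k)
  rw [integral_map (by fun_prop) (by fun_prop)] at h ⊢
  simp only [inner_neg_right, hk.neg_pow, integral_neg] at h
  linarith

theorem ae_inner_mem_Icc (hμ : ∀ᵐ x ∂μ, ‖x‖ = 1) {v : E} (hv : ‖v‖ = 1) :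
    ∀ᵐ t ∂(μ.map (⟪·, v⟫)), t ∈ Set.Icc (-1) 1 := by
  refine (ae_map_iff (by fun_prop) measurableSet_Icc).mpr ?_
  filter_upwards [hμ] with x hx
  have := abs_real_inner_le_norm x v
  rw [hx, hv, one_mul] at this
  exact abs_le.mp this

theorem integrable_prod_inner_pow [SecondCountableTopology E] {ρ : Measure ℝ} [IsFiniteMeasure ρ]
    [IsFiniteMeasure μ] (hμ : ∀ᵐ x ∂μ, ‖x‖ = 1) {u : ℝ → E} (hcont : Continuous u)
    (hu : ∀ α, ‖u α‖ = 1) (k : ℕ) :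
    Integrable (fun p : ℝ × E => ⟪p.2, u p.1⟫ ^ k) (ρ.prod μ) := by
  refine Integrable.of_bound (by fun_prop) 1 ?_
  filter_upwards [Measure.quasiMeasurePreserving_snd.ae hμ] with p hp
  have := abs_real_inner_le_norm p.2 (u p.1)
  rw [hp, hu, one_mul] at this
  rw [Real.norm_eq_abs, abs_pow]
  exact pow_le_one₀ (abs_nonneg _) this

theorem integral_pow_even_map_inner (hE : finrank ℝ E = 3) [IsFiniteMeasure μ]
    (hinv : ∀ g : E ≃ₗᵢ[ℝ] E, μ.map g = μ) (hμ : ∀ᵐ x ∂μ, ‖x‖ = 1) {v : E} (hv : ‖v‖ = 1)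
    (n : ℕ) :
    ∫ t, t ^ (2 * n) ∂(μ.map (⟪·, v⟫)) =
      (∏ i ∈ range n, (2 * (i : ℝ) + 1) / (2 * i + 2)) *
        ∫ t, (1 - t ^ 2) ^ n ∂(μ.map (⟪·, v⟫)) := by
  have : FiniteDimensional ℝ E := Module.finite_of_finrank_eq_succ hE
  set b := (stdOrthonormalBasis ℝ E).reindex (finCongr hE)
  set u : ℝ → E := fun α => cos α • b 0 + sin α • b 1
  have hu (α : ℝ) : ‖u α‖ = ‖v‖ := by
    rw [hv]
    exact norm_cos_smul_add_sin_smul (b.orthonormal.1 0) (b.orthonormal.1 1)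
      (b.orthonormal.2 (by decide)) α
  have hpyth : ∀ᵐ x ∂μ, ⟪b 0, x⟫ ^ 2 + ⟪b 1, x⟫ ^ 2 = 1 - ⟪x, b 2⟫ ^ 2 := by
    filter_upwards [hμ] with x hx
    have := b.sum_sq_inner_right x
    rw [Fin.sum_univ_three, hx, real_inner_comm x (b 2)] at this
    linarith
  set ρ := volume.restrict (Set.Ioc 0 (2 * π))
  set F : ℝ → E → ℝ := fun α x => ⟪x, u α⟫ ^ (2 * n)
  have hF : Integrable (Function.uncurry F) (ρ.prod μ) :=
    integrable_prod_inner_pow hμ (by fun_prop) (fun α => (hu α).trans hv) (2 * n)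
  have hleft : ∫ α, ∫ x, F α x ∂μ ∂ρ = 2 * π * ∫ t, t ^ (2 * n) ∂(μ.map (⟪·, v⟫)) := by
    simp [F, integral_comp_inner_eq_of_norm_eq hinv (hu _) (continuous_pow _), ρ, pi_pos.le]
  have hright : ∫ x, ∫ α, F α x ∂ρ ∂μ =
      (2 * π * ∏ i ∈ range n, (2 * (i : ℝ) + 1) / (2 * i + 2)) *
        ∫ t, (1 - t ^ 2) ^ n ∂(μ.map (⟪·, v⟫)) := by
    have hcircle : (fun x => ∫ α, F α x ∂ρ) =ᵐ[μ] fun x => (1 - ⟪x, b 2⟫ ^ 2) ^ n *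
        (2 * π * ∏ i ∈ range n, (2 * (i : ℝ) + 1) / (2 * i + 2)) := by
      filter_upwards [hpyth] with x hx
      rw [← hx, ← integral_inner_cos_smul_add_sin_smul_pow_even,
        intervalIntegral.integral_of_le (by positivity)]
    rw [integral_congr_ae hcircle, integral_mul_const, mul_comm,
      integral_comp_inner_eq_of_norm_eq hinv (u := b 2) (w := v) (by simp [hv])
        (f := fun t => (1 - t ^ 2) ^ n)
        (by fun_prop)]
  have hfubini := integral_integral_swap hF
  rw [hleft, hright, mul_assoc (2 * π)] at hfubini
  exact mul_left_cancel₀ (by positivity : 2 * π ≠ 0) hfubini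

theorem map_inner_eq_cond_Icc_neg_one_one (hE : finrank ℝ E = 3) [IsProbabilityMeasure μ]
    (hinv : ∀ g : E ≃ₗᵢ[ℝ] E, μ.map g = μ) (hμ : ∀ᵐ x ∂μ, ‖x‖ = 1) {v : E} (hv : ‖v‖ = 1) :
    μ.map (⟪·, v⟫) = volume[|Set.Icc (-1 : ℝ) 1] := by
  have : IsProbabilityMeasure (μ.map (⟪·, v⟫)) := Measure.isProbabilityMeasure_map (by fun_prop)
  refine Measure.eq_of_integral_pow_even_eq_mul (ae_inner_mem_Icc hμ hv)
    (ae_cond_mem measurableSet_Icc) (fun k hk => integral_pow_map_inner_of_odd hinv v hk)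
    (fun k hk => ?_) (fun n hn => ?_) (integral_pow_even_map_inner hE hinv hμ hv)
    integral_pow_even_cond_Icc_neg_one_one
  · rw [integral_pow_cond_Icc_neg_one_one, (hk.add_one).neg_one_pow, sub_self, zero_div]
  · rw [abs_of_nonneg (prod_nonneg fun i _ => by positivity)]
    exact prod_two_mul_add_one_div_lt_one hn

end InnerProductSpace

theorem ciInf_le_iff_of_finite {ι α : Type*} [Finite ι] [Nonempty ι]
    [ConditionallyCompleteLinearOrder α] {f : ι → α} {a : α} :
    ⨅ i, f i ≤ a ↔ ∃ i, f i ≤ a := by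
  constructor
  · obtain ⟨i, hi⟩ := exists_eq_ciInf_of_finite (f := f)
    exact fun h => ⟨i, hi ▸ h⟩
  · rintro ⟨i, hi⟩
    exact (ciInf_le (Finite.bddBelow_range f) i).trans hi

/-- Lemma 1: the CDF of the contact angle. For `N ≥ 1` satellites `X₁, …, X_N`
independently and uniformly distributed on the unit sphere of `ℝ³` (product of `N`
copies of the rotation-invariant probability measure `μ` concentrated on the sphere),
the contact angle `θ₀ = min_i arccos ⟪Xᵢ, v⟫` to a fixed unit direction `v` satisfies
`P[θ₀ ≤ θ] = 1 − ((1 + cos θ)/2)^N` for `θ ∈ [0, π]`. -/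
theorem contactAngle_cdf
    (N : ℕ) (hN : 1 ≤ N)
    (μ : Measure (EuclideanSpace ℝ (Fin 3))) [IsProbabilityMeasure μ]
    (hsupp : μ (Metric.sphere (0 : EuclideanSpace ℝ (Fin 3)) 1) = 1)
    (hinv : ∀ g : EuclideanSpace ℝ (Fin 3) ≃ₗᵢ[ℝ] EuclideanSpace ℝ (Fin 3),
      μ.map g = μ)
    (v : EuclideanSpace ℝ (Fin 3)) (hv : ‖v‖ = 1)
    (θ : ℝ) (hθ : θ ∈ Set.Icc (0 : ℝ) π) :
    Measure.pi (fun _ : Fin N => μ)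
        {X : Fin N → EuclideanSpace ℝ (Fin 3) |
          (⨅ i : Fin N, Real.arccos ⟪X i, v⟫) ≤ θ} =
      ENNReal.ofReal (1 - ((1 + Real.cos θ) / 2) ^ N) := by
  have : Nonempty (Fin N) := ⟨⟨0, hN⟩⟩
  have hμ : ∀ᵐ x ∂μ, ‖x‖ = 1 := by
    filter_upwards [mem_ae_iff.mpr
      ((prob_compl_eq_zero_iff Metric.isClosed_sphere.measurableSet).mpr hsupp)] with x hx
    simpa using hx
  have hlaw := map_inner_eq_cond_Icc_neg_one_one finrank_euclideanSpace_fin hinv hμ hv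
  have hS : MeasurableSet {y : ℝ | θ < arccos y} :=
    measurableSet_lt measurable_const continuous_arccos.measurable
  have hevent : {X : Fin N → EuclideanSpace ℝ (Fin 3) | ⨅ i, arccos ⟪X i, v⟫ ≤ θ} =
      (Set.univ.pi fun _ => (⟪·, v⟫) ⁻¹' {y : ℝ | θ < arccos y})ᶜ := by
    ext X
    simp [ciInf_le_iff_of_finite]
  have hp : 0 ≤ (1 + cos θ) / 2 := by linarith [neg_one_le_cos θ]
  rw [hevent, prob_compl_eq_one_sub (.univ_pi fun _ => measurableSet_preimage (by fun_prop) hS),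
    Measure.pi_pi]
  simp only [← Measure.map_apply (by fun_prop : Measurable (⟪·, v⟫)) hS, hlaw,
    cond_Icc_neg_one_one_setOf_lt_arccos hθ, prod_const, card_univ, Fintype.card_fin]
  rw [ENNReal.ofReal_sub _ (pow_nonneg hp N), ENNReal.ofReal_one, ENNReal.ofReal_pow hp]
end

section
/- Let 0 < ε < 1, Θ > 0, θ_max ∈ (0, π], and let θ_t satisfy 0 < θ_t < θ_max/2. Set N_t = ⌈Θ/(θ_max − 2θ_t)⌉ + 1. If the number of satellites N (a positive integer) satisfies N ≥ (1/ln((1 + cos θ_t)/2)) · ln(1 − (1 − ε)^{1/N_t}), then ((1 + cos θ_t)/2)^N ≤ 1 − (1 − ε)^{1/N_t}; consequently (1 − ((1 + cos θ_t)/2)^N)^{N_t} ≥ 1 − ε, i.e. the probability that no satellite is available within angle θ_t of the target relay position in at least one of the N_t hops is at most ε. -/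
open Real

/-- Proposition 4: a sufficient condition on the number of satellites for type-I
interruption not to occur. With `N_t = ⌈Θ/(θ_max − 2θ_t)⌉ + 1` hops, if
`N ≥ ln(1 − (1 − ε)^(1/N_t)) / ln((1 + cos θ_t)/2)`, then
`((1 + cos θ_t)/2)^N ≤ 1 − (1 − ε)^(1/N_t)`, and consequently the probability of
finding a satellite within angle `θ_t` in each of the `N_t` hops is at least `1 − ε`:
`(1 − ((1 + cos θ_t)/2)^N)^(N_t) ≥ 1 − ε`. -/
theorem min_satellite_number (ε Θ θmax θt : ℝ)
    (hε0 : 0 < ε) (hε1 : ε < 1) (hΘ : 0 < Θ)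
    (hθmax : θmax ∈ Set.Ioc (0 : ℝ) π)
    (hθt0 : 0 < θt) (hθt : θt < θmax / 2)
    (N : ℕ) (hN1 : 1 ≤ N)
    (hN : (N : ℝ) ≥ 1 / Real.log ((1 + Real.cos θt) / 2) *
      Real.log (1 - (1 - ε) ^
        ((1 : ℝ) / (⌈Θ / (θmax - 2 * θt)⌉₊ + 1)))) :
    ((1 + Real.cos θt) / 2) ^ N ≤
      1 - (1 - ε) ^ ((1 : ℝ) / (⌈Θ / (θmax - 2 * θt)⌉₊ + 1)) ∧
    (1 - ((1 + Real.cos θt) / 2) ^ N) ^ (⌈Θ / (θmax - 2 * θt)⌉₊ + 1) ≥ 1 - ε := by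
  set Nt : ℕ := ⌈Θ / (θmax - 2 * θt)⌉₊ + 1 with hNt
  set q : ℝ := (1 + Real.cos θt) / 2 with hq
  set x : ℝ := (1 - ε) ^ ((1 : ℝ) / Nt) with hx
  have hc : ((⌈Θ / (θmax - 2 * θt)⌉₊ : ℝ) + 1) = (Nt : ℝ) := by rw [hNt]; push_cast; ring
  rw [hc] at hN ⊢
  have hθtπ : θt < π / 2 := lt_of_lt_of_le hθt (by linarith [hθmax.2])
  have hcos : 0 < Real.cos θt := Real.cos_pos_of_mem_Ioo ⟨by linarith, hθtπ⟩
  have hcos1 : Real.cos θt < 1 := by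
    have := Real.cos_lt_cos_of_nonneg_of_le_pi le_rfl (by linarith [Real.pi_pos]) hθt0
    simpa using this
  have hq0 : 0 < q := by rw [hq]; linarith
  have hq1 : q < 1 := by rw [hq]; linarith
  have hlogq : Real.log q < 0 := Real.log_neg hq0 hq1
  have h1ε0 : 0 < 1 - ε := by linarith
  have hx0 : 0 < x := Real.rpow_pos_of_pos h1ε0 _
  have hNt0 : (0 : ℝ) < (Nt : ℝ) := by positivity
  have hx1 : x < 1 := by
    rw [hx]
    exact Real.rpow_lt_one (le_of_lt h1ε0) (by linarith) (by positivity)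
  have h1x0 : 0 < 1 - x := by linarith
  have hlog1x : Real.log (1 - x) < 0 := Real.log_neg h1x0 (by linarith)
  -- main inequality: N * log q ≤ log (1 - x)
  have hmul : (N : ℝ) * Real.log q ≤ Real.log (1 - x) := by
    have := hN
    rw [one_div, inv_mul_eq_div, ge_iff_le, div_le_iff_of_neg hlogq] at this
    linarith
  have hmain : q ^ N ≤ 1 - x := by
    have h1 : q ^ N = Real.exp ((N : ℝ) * Real.log q) := by
      rw [← Real.log_pow, Real.exp_log (pow_pos hq0 N)]
    have h2 : 1 - x = Real.exp (Real.log (1 - x)) := (Real.exp_log h1x0).symm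
    rw [h1, h2]
    exact Real.exp_le_exp.mpr hmul
  refine ⟨hmain, ?_⟩
  have hxle : x ≤ 1 - q ^ N := by linarith
  calc (1 - q ^ N) ^ Nt ≥ x ^ Nt := pow_le_pow_left₀ (le_of_lt hx0) hxle Nt
    _ = 1 - ε := by
        rw [hx, ← Real.rpow_natCast ((1 - ε) ^ ((1:ℝ)/Nt)) Nt,
          ← Real.rpow_mul (le_of_lt h1ε0), one_div,
          inv_mul_cancel₀ (ne_of_gt hNt0), Real.rpow_one]
end
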